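/- Let R be a commutative ring, S a commutative ring extension of R, a ∈ Sⁿ a tuple, D : R → S a derivation, and A ⊆ R[X₁,...,Xₙ] a generating set of the ideal I(a/R) = {f ∈ R[X̄] : f(a) = 0}. If there exists b ∈ Sⁿ with τ(g)(a,b) = 0 for all g ∈ A (where τg = Σᵢ (∂g/∂Xᵢ)·Yᵢ + g^D), then there exists a unique derivation D' : R[a] → S extending D with D'(aᵢ) = bᵢ for all i. -/

import Mathlib

/-! The map `f ↦ τ(f)(a,b)` is a derivation `R[X] → S` over evaluation at `a` (Leibniz rule for
`pderiv` and for `f ↦ f^D`). Vanishing on `A`, it vanishes on the ideal `I(a/R)` that `A`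
generates, so it descends to `R[a] ≅ R[X]/I(a/R)`, where it extends `D` and sends `aᵢ` to `bᵢ`.
Uniqueness holds because a derivation is determined by its values on generators of the ring. -/

open MvPolynomial

/-- Applying `D : R → S` to each coefficient of a multivariate polynomial. -/
noncomputable def coeffMap {R S : Type*} [CommRing R] [CommRing S] {σ : Type*}
    (D : R → S) (f : MvPolynomial σ R) : MvPolynomial σ S :=
  f.support.sum fun m => monomial m (D (coeff m f))

/-- `τ(g)(a,b) = ∑ i, (∂g/∂Xᵢ)(a) * bᵢ + g^D(a)` for `g` a polynomial over the
subring `R` of `S`, evaluated at tuples `a`, `b` from `S`. -/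
noncomputable def tauEval {S : Type*} [CommRing S] (R : Subring S) {n : ℕ}
    (D : R → S) (g : MvPolynomial (Fin n) R) (a b : Fin n → S) : S :=
  (∑ i, eval₂ R.subtype a (pderiv i g) * b i) + eval a (coeffMap D g)

lemma apply_zero_of_map_add {R S : Type*} [AddZeroClass R] [AddGroup S] {D : R → S}
    (hDadd : ∀ x y : R, D (x + y) = D x + D y) : D 0 = 0 :=
  map_zero (AddMonoidHom.mk' D hDadd)

lemma apply_one_of_leibniz {R S : Type*} [CommRing R] [CommRing S] (φ : R →+* S) {D : R → S}
    (hDmul : ∀ x y : R, D (x * y) = D x * φ y + φ x * D y) :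
    D 1 = 0 := by
  simpa using hDmul 1 1

section CoeffMap

variable {R S σ : Type*} [CommRing R] [CommRing S] {D : R → S}

lemma coeff_coeffMap (hD0 : D 0 = 0) (f : MvPolynomial σ R) (m : σ →₀ ℕ) :
    coeff m (coeffMap D f) = D (coeff m f) := by
  classical
  rw [coeffMap, coeff_sum]
  simp only [coeff_monomial, Finset.sum_ite_eq', mem_support_iff]
  split_ifs with h
  · rfl
  · rw [not_not.mp h, hD0]

lemma coeffMap_add (hDadd : ∀ x y : R, D (x + y) = D x + D y) (f g : MvPolynomial σ R) :
    coeffMap D (f + g) = coeffMap D f + coeffMap D g := by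
  ext m
  simp only [coeff_add, coeff_coeffMap (apply_zero_of_map_add hDadd), hDadd]

lemma coeffMap_monomial (hD0 : D 0 = 0) (m : σ →₀ ℕ) (c : R) :
    coeffMap D (monomial m c) = monomial m (D c) := by
  classical
  ext m'
  rw [coeff_coeffMap hD0, coeff_monomial, coeff_monomial]
  split_ifs <;> simp [hD0]

lemma coeffMap_mul (φ : R →+* S) (hDadd : ∀ x y : R, D (x + y) = D x + D y)
    (hDmul : ∀ x y : R, D (x * y) = D x * φ y + φ x * D y) (f g : MvPolynomial σ R) :
    coeffMap D (f * g) = coeffMap D f * map φ g + map φ f * coeffMap D g := by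
  have hD0 := apply_zero_of_map_add hDadd
  induction f using MvPolynomial.induction_on' with
  | add p q hp hq => simp only [add_mul, coeffMap_add hDadd, hp, hq, map_add]; ring
  | monomial m c =>
    induction g using MvPolynomial.induction_on' with
    | add p q hp hq => simp only [mul_add, coeffMap_add hDadd, hp, hq, map_add]; ring
    | monomial m' c' =>
      simp only [monomial_mul, coeffMap_monomial hD0, map_monomial, hDmul, map_add]

end CoeffMap

section TauEval

variable {S : Type*} [CommRing S] {R : Subring S} {n : ℕ} {D : R → S} (a b : Fin n → S)

lemma tauEval_add (hDadd : ∀ x y : R, D (x + y) = D x + D y) (f g : MvPolynomial (Fin n) R) :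
    tauEval R D (f + g) a b = tauEval R D f a b + tauEval R D g a b := by
  simp only [tauEval, map_add, eval₂_add, add_mul, Finset.sum_add_distrib, coeffMap_add hDadd]
  ring

lemma tauEval_mul (hDadd : ∀ x y : R, D (x + y) = D x + D y)
    (hDmul : ∀ x y : R, D (x * y) = D x * (y : S) + (x : S) * D y)
    (f g : MvPolynomial (Fin n) R) :
    tauEval R D (f * g) a b =
      tauEval R D f a b * eval₂ R.subtype a g + eval₂ R.subtype a f * tauEval R D g a b := by
  have hsum : ∑ i, eval₂ R.subtype a (pderiv i (f * g)) * b i =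
      (∑ i, eval₂ R.subtype a (pderiv i f) * b i) * eval₂ R.subtype a g +
        eval₂ R.subtype a f * ∑ i, eval₂ R.subtype a (pderiv i g) * b i := by
    rw [Finset.sum_mul, Finset.mul_sum, ← Finset.sum_add_distrib]
    refine Finset.sum_congr rfl fun i _ => ?_
    rw [pderiv_mul, eval₂_add, eval₂_mul, eval₂_mul]
    ring
  rw [tauEval, tauEval, tauEval, hsum, coeffMap_mul R.subtype hDadd hDmul, map_add, map_mul,
    map_mul, eval_map, eval_map]
  ring

lemma tauEval_C (hDadd : ∀ x y : R, D (x + y) = D x + D y) (r : R) :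
    tauEval R D (C r) a b = D r := by
  simp [tauEval, ← monomial_zero', coeffMap_monomial (apply_zero_of_map_add hDadd), eval_monomial]

lemma tauEval_X (hDadd : ∀ x y : R, D (x + y) = D x + D y)
    (hDmul : ∀ x y : R, D (x * y) = D x * (y : S) + (x : S) * D y) (i : Fin n) :
    tauEval R D (X i) a b = b i := by
  have hX : coeffMap D (X i : MvPolynomial (Fin n) R) = 0 := by
    rw [X, coeffMap_monomial (apply_zero_of_map_add hDadd), apply_one_of_leibniz R.subtype hDmul,
      map_zero]
  simp [tauEval, hX, pderiv_X, Pi.single_apply, apply_ite (eval₂ _ _), ite_mul]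

lemma tauEval_eq_zero_of_mem_ker (hDadd : ∀ x y : R, D (x + y) = D x + D y)
    (hDmul : ∀ x y : R, D (x * y) = D x * (y : S) + (x : S) * D y)
    {A : Set (MvPolynomial (Fin n) R)} (hA : Ideal.span A = RingHom.ker (eval₂Hom R.subtype a))
    (hb : ∀ g ∈ A, tauEval R D g a b = 0) {f : MvPolynomial (Fin n) R}
    (hf : f ∈ RingHom.ker (eval₂Hom R.subtype a)) : tauEval R D f a b = 0 := by
  rw [← hA] at hf
  induction hf using Submodule.span_induction with
  | mem g hg => exact hb g hg
  | zero => simpa using tauEval_add a b hDadd 0 0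
  | add g h _ _ hg hh => rw [tauEval_add a b hDadd, hg, hh, add_zero]
  | smul p g hg_mem hg =>
    have hg_ker : eval₂Hom R.subtype a g = 0 := by rwa [← RingHom.mem_ker, ← hA]
    rw [smul_eq_mul, tauEval_mul a b hDadd hDmul, hg, ← coe_eval₂Hom, hg_ker, mul_zero, mul_zero,
      add_zero]

end TauEval

lemma exists_leibniz_descent {P S : Type*} [CommRing P] [CommRing S] (ev : P →+* S) {T : P → S}
    (hT_add : ∀ f g, T (f + g) = T f + T g) (hT_mul : ∀ f g, T (f * g) = T f * ev g + ev f * T g)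
    (hT_ker : ∀ f ∈ RingHom.ker ev, T f = 0) {K : Subring S} (hK : K ≤ ev.range) :
    ∃ D' : K → S, (∀ x y, D' (x + y) = D' x + D' y) ∧
      (∀ x y, D' (x * y) = D' x * (y : S) + (x : S) * D' y) ∧
      ∀ f (x : K), ev f = x → D' x = T f := by
  choose F hF using fun x : K => hK x.2
  have hT : ∀ f g, ev f = ev g → T f = T g := fun f g h => by
    have hsub : T (f - g) = T f - T g := map_sub (AddMonoidHom.mk' T hT_add) f g
    rw [← sub_eq_zero, ← hsub, hT_ker]
    rw [RingHom.mem_ker, map_sub, h, sub_self]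
  have hlift : ∀ f (x : K), ev f = x → T (F x) = T f := fun f x h => hT _ _ ((hF x).trans h.symm)
  refine ⟨fun x => T (F x), fun x y => ?_, fun x y => ?_, hlift⟩
  · dsimp only
    rw [hlift (F x + F y) (x + y) (by simp [hF]), hT_add]
  · dsimp only
    rw [hlift (F x * F y) (x * y) (by simp [hF]), hT_mul, hF, hF]

lemma leibniz_closure_ext {S : Type*} [CommRing S] {s : Set S} {D₁ D₂ : Subring.closure s → S}
    (h₁_add : ∀ x y, D₁ (x + y) = D₁ x + D₁ y)
    (h₁_mul : ∀ x y, D₁ (x * y) = D₁ x * (y : S) + (x : S) * D₁ y)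
    (h₂_add : ∀ x y, D₂ (x + y) = D₂ x + D₂ y)
    (h₂_mul : ∀ x y, D₂ (x * y) = D₂ x * (y : S) + (x : S) * D₂ y)
    (h : ∀ x (hx : x ∈ s), D₁ ⟨x, Subring.subset_closure hx⟩ = D₂ ⟨x, Subring.subset_closure hx⟩) :
    D₁ = D₂ := by
  funext ⟨x, hx⟩
  induction hx using Subring.closure_induction with
  | mem x hx => exact h x hx
  | zero => exact (apply_zero_of_map_add h₁_add).trans (apply_zero_of_map_add h₂_add).symm
  | one =>
    exact (apply_one_of_leibniz (Subring.closure s).subtype h₁_mul).trans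
      (apply_one_of_leibniz (Subring.closure s).subtype h₂_mul).symm
  | add x y hx hy ihx ihy =>
    calc D₁ ⟨x + y, _⟩ = D₁ ⟨x, hx⟩ + D₁ ⟨y, hy⟩ := h₁_add ⟨x, hx⟩ ⟨y, hy⟩
      _ = D₂ ⟨x, hx⟩ + D₂ ⟨y, hy⟩ := by rw [ihx, ihy]
      _ = D₂ ⟨x + y, _⟩ := (h₂_add ⟨x, hx⟩ ⟨y, hy⟩).symm
  | neg x hx ihx =>
    calc D₁ ⟨-x, _⟩ = -D₁ ⟨x, hx⟩ := map_neg (AddMonoidHom.mk' D₁ h₁_add) ⟨x, hx⟩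
      _ = -D₂ ⟨x, hx⟩ := by rw [ihx]
      _ = D₂ ⟨-x, _⟩ := (map_neg (AddMonoidHom.mk' D₂ h₂_add) ⟨x, hx⟩).symm
  | mul x y hx hy ihx ihy =>
    calc D₁ ⟨x * y, _⟩ = D₁ ⟨x, hx⟩ * y + x * D₁ ⟨y, hy⟩ := h₁_mul ⟨x, hx⟩ ⟨y, hy⟩
      _ = D₂ ⟨x, hx⟩ * y + x * D₂ ⟨y, hy⟩ := by rw [ihx, ihy]
      _ = D₂ ⟨x * y, _⟩ := (h₂_mul ⟨x, hx⟩ ⟨y, hy⟩).symm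

/-- Extension of a derivation along a point of the prolongation: if `A` generates the
vanishing ideal of `a` over `R` and `τ(g)(a,b) = 0` for all `g ∈ A`, then there is a
unique derivation `D' : R[a] → S` extending `D` with `D' aᵢ = bᵢ`. -/
theorem stmt8 {S : Type*} [CommRing S] (R : Subring S) {n : ℕ}
    (D : R → S)
    (hDadd : ∀ x y : R, D (x + y) = D x + D y)
    (hDmul : ∀ x y : R, D (x * y) = D x * (y : S) + (x : S) * D y)
    (a b : Fin n → S)
    (A : Set (MvPolynomial (Fin n) R))
    (hA : Ideal.span A = RingHom.ker (eval₂Hom R.subtype a))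
    (hb : ∀ g ∈ A, tauEval R D g a b = 0) :
    ∃! D' : Subring.closure ((R : Set S) ∪ Set.range a) → S,
      (∀ x y, D' (x + y) = D' x + D' y) ∧
      (∀ x y, D' (x * y) = D' x * (y : S) + (x : S) * D' y) ∧
      (∀ r : R, D' ⟨(r : S), Subring.subset_closure (Or.inl r.2)⟩ = D r) ∧
      (∀ i, D' ⟨a i, Subring.subset_closure (Or.inr ⟨i, rfl⟩)⟩ = b i) := by
  have hclosure : Subring.closure ((R : Set S) ∪ Set.range a) ≤ (eval₂Hom R.subtype a).range :=
    Subring.closure_le.2 <| by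
      rintro _ (hr | ⟨i, rfl⟩)
      exacts [⟨C ⟨_, hr⟩, eval₂_C _ _ _⟩, ⟨X i, eval₂_X _ _ _⟩]
  obtain ⟨D', hadd, hmul, hlift⟩ := exists_leibniz_descent _ (tauEval_add a b hDadd)
    (tauEval_mul a b hDadd hDmul) (fun _ => tauEval_eq_zero_of_mem_ker a b hDadd hDmul hA hb)
    hclosure
  have hC : ∀ r : R, D' ⟨(r : S), Subring.subset_closure (Or.inl r.2)⟩ = D r := fun r =>
    (hlift (C r) _ (by simp)).trans (tauEval_C a b hDadd r)
  have hX : ∀ i, D' ⟨a i, Subring.subset_closure (Or.inr ⟨i, rfl⟩)⟩ = b i := fun i =>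
    (hlift (X i) _ (by simp)).trans (tauEval_X a b hDadd hDmul i)
  refine ⟨D', ⟨hadd, hmul, hC, hX⟩, fun D'' ⟨hadd', hmul', hC', hX'⟩ =>
    leibniz_closure_ext hadd' hmul' hadd hmul ?_⟩
  rintro _ (hr | ⟨i, rfl⟩)
  · exact (hC' ⟨_, hr⟩).trans (hC ⟨_, hr⟩).symm
  · exact (hX' i).trans (hX i).symm
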